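/- Let σ and τ be positive semidefinite matrices on a finite-dimensional complex Hilbert space with tr(σ) ≥ 1, tr(τ) = 1, and rank(τ) ≤ r. Then ‖σ − τ‖₁ ≥ 2 − 2r·‖σ‖_∞, where ‖X‖₁ = tr√(X†X) is the trace norm and ‖σ‖_∞ is the operator norm (largest eigenvalue of σ). -/

import Mathlib

open MeasureTheory Matrix BigOperators Finset
open scoped ComplexOrder

noncomputable section

section Prelude

variable {n : Type*} [Fintype n] [DecidableEq n]

/-- The positive semidefinite square root of a positive semidefinite matrix
(the definition `Matrix.PosSemidef.sqrt` of the older Mathlib, removed since). -/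
def Matrix.PosSemidef.sqrt {A : Matrix n n ℂ} (hA : A.PosSemidef) : Matrix n n ℂ :=
  hA.1.eigenvectorUnitary.1 * diagonal ((↑) ∘ (√·) ∘ hA.1.eigenvalues) *
  (star hA.1.eigenvectorUnitary : Matrix n n ℂ)

/-- The inner product `⟨u|A|v⟩ = Σᵢⱼ conj(uᵢ) Aᵢⱼ vⱼ`. -/
def braket (A : Matrix n n ℂ) (u v : n → ℂ) : ℂ :=
  ∑ i, ∑ j, (starRingEnd ℂ) (u i) * A i j * v j

/-- `μ` is the Haar measure on unit vectors: a probability measure supported on the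
unit sphere that is invariant under every unitary. -/
def IsHaarUnit (μ : Measure (n → ℂ)) : Prop :=
  IsProbabilityMeasure μ ∧
  (∀ᵐ φ ∂μ, ∑ i, Complex.normSq (φ i) = 1) ∧
  ∀ U ∈ Matrix.unitaryGroup n ℂ, Measure.map (fun φ => U.mulVec φ) μ = μ

/-- `r_φ = d ⟨φ|ρ|φ⟩`. -/
def rphi (ρ : Matrix n n ℂ) (φ : n → ℂ) : ℝ :=
  (Fintype.card n : ℝ) * (braket ρ φ φ).re

/-- The Scrooge (ρ-distorted) state `√(dρ) φ / √(r_φ)`. -/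
def scroogeVec {ρ : Matrix n n ℂ} (hρ : ρ.PosSemidef) (φ : n → ℂ) : n → ℂ :=
  ((Real.sqrt (Fintype.card n) / Real.sqrt (rphi ρ φ) : ℝ) : ℂ) • hρ.sqrt.mulVec φ

/-- Scrooge-ensemble expectation of a real function of the pure state:
`E_{ψ∼S_ρ}[f(ψ)] = ∫ dμ_Haar(φ) r_φ f(√(dρ)φ/√(r_φ))`. -/
def scroogeExp (μ : Measure (n → ℂ)) {ρ : Matrix n n ℂ} (hρ : ρ.PosSemidef)
    (f : (n → ℂ) → ℝ) : ℝ :=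
  ∫ φ, rphi ρ φ * f (scroogeVec hρ φ) ∂μ

/-- The largest eigenvalue of a Hermitian matrix. -/
def maxEig {A : Matrix n n ℂ} (hA : A.IsHermitian) : ℝ := ⨆ i, hA.eigenvalues i

/-- Min-entropy `S_∞ = -log₂ ‖A‖_∞`. -/
def Sinf {A : Matrix n n ℂ} (hA : A.IsHermitian) : ℝ := -Real.logb 2 (maxEig hA)

/-- The `k`-fold tensor (Kronecker) power of a matrix, on index type `Fin k → n`. -/
def tpow (A : Matrix n n ℂ) (k : ℕ) : Matrix (Fin k → n) (Fin k → n) ℂ :=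
  fun x y => ∏ i, A (x i) (y i)

/-- Tensor product of a family of matrices, on index type `Fin k → n`. -/
def tpowFam {k : ℕ} (A : Fin k → Matrix n n ℂ) :
    Matrix (Fin k → n) (Fin k → n) ℂ :=
  fun x y => ∏ i, A i (x i) (y i)

/-- The operator `P_π` permuting tensor factors: `P_π (v₁⊗⋯⊗v_k) = v_{π⁻¹(1)}⊗⋯⊗v_{π⁻¹(k)}`. -/
def permMat (n : Type*) [DecidableEq n] (k : ℕ) (π : Equiv.Perm (Fin k)) :
    Matrix (Fin k → n) (Fin k → n) ℂ :=
  fun x y => if (fun i => x (π i)) = y then 1 else 0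

/-- Loewner order: `A ⪯ B` iff `B - A` is positive semidefinite. -/
def matLE {m : Type*} [Fintype m] (A B : Matrix m m ℂ) : Prop := (B - A).PosSemidef

/-- The trace norm `‖X‖₁ = tr √(XᴴX)`. -/
def traceNorm (X : Matrix n n ℂ) : ℝ :=
  ((Matrix.posSemidef_conjTranspose_mul_self X).sqrt.trace).re

/-- The operator (spectral) norm `‖X‖_∞ = √(max eig (XᴴX))`. -/
def opNorm (X : Matrix n n ℂ) : ℝ :=
  Real.sqrt (maxEig (Matrix.posSemidef_conjTranspose_mul_self X).1)

/-- k-th moment of the Scrooge ensemble, `χ^{(k)}_{S_ρ} = E_{ψ∼S_ρ}[(|ψ⟩⟨ψ|)^{⊗k}]`,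
computed entrywise. -/
def scroogeMoment (μ : Measure (n → ℂ)) {ρ : Matrix n n ℂ} (hρ : ρ.PosSemidef) (k : ℕ) :
    Matrix (Fin k → n) (Fin k → n) ℂ :=
  fun x y => ∫ φ, ((rphi ρ φ : ℝ) : ℂ) *
    ∏ i, (scroogeVec hρ φ (x i) * (starRingEnd ℂ) (scroogeVec hρ φ (y i))) ∂μ

end Prelude

/-!
Let `P` be the projection onto the support of `τ`. Then `M = 1 - 2P` satisfies `-1 ≤ M ≤ 1`, so
`‖σ - τ‖₁ ≥ Re tr((σ - τ) M) = tr σ + 1 - 2 tr(σP) ≥ 2 - 2 tr(σP)`, using `τP = τ`.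
Finally `σ ≤ ‖σ‖_∞ • 1` gives `tr(σP) ≤ ‖σ‖_∞ tr P = ‖σ‖_∞ rank τ`.
-/

open scoped MatrixOrder

namespace Matrix

variable {𝕜 : Type*} [RCLike 𝕜] {n : Type*} [Fintype n] [DecidableEq n]

lemma IsHermitian.trace_cfc {A : Matrix n n 𝕜} (hA : A.IsHermitian) (f : ℝ → ℝ) :
    (cfc f A).trace = ∑ i, (f (hA.eigenvalues i) : 𝕜) := by
  rw [hA.cfc_eq, IsHermitian.cfc, Unitary.conjStarAlgAut_apply, trace_mul_cycle,
    Unitary.coe_star_mul_self, one_mul, trace_diagonal]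
  rfl

lemma PosSemidef.trace_mul_nonneg {A B : Matrix n n 𝕜} (hA : A.PosSemidef) (hB : B.PosSemidef) :
    0 ≤ (A * B).trace := by
  have hS : (CFC.sqrt A)ᴴ = CFC.sqrt A := (CFC.sqrt_nonneg (a := A)).isSelfAdjoint
  rw [← CFC.sqrt_mul_sqrt_self A hA.nonneg, mul_assoc, trace_mul_comm]
  nth_rw 1 [← hS]
  exact (hB.conjTranspose_mul_mul_same (CFC.sqrt A)).trace_nonneg

lemma re_trace_mul_le_of_le_algebraMap {A P : Matrix n n 𝕜} {c : ℝ}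
    (hA : A ≤ algebraMap ℝ _ c) (hP : 0 ≤ P) :
    RCLike.re (A * P).trace ≤ c * RCLike.re P.trace := by
  have h := (RCLike.nonneg_iff.1 ((sub_nonneg.2 hA).posSemidef.trace_mul_nonneg hP.posSemidef)).1
  rw [sub_mul, trace_sub, map_sub, ← Algebra.smul_def, trace_smul, RCLike.smul_re] at h
  linarith

lemma re_trace_mul_le_re_trace_abs {X M : Matrix n n 𝕜} (hX : X.IsHermitian)
    (hM₁ : -1 ≤ M) (hM₂ : M ≤ 1) :
    RCLike.re (X * M).trace ≤ RCLike.re (CFC.abs X).trace := by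
  have hX' : IsSelfAdjoint X := hX
  have hpos := (RCLike.nonneg_iff.1 <|
    (CFC.posPart_nonneg X).posSemidef.trace_mul_nonneg (sub_nonneg.2 hM₂).posSemidef).1
  have hneg := (RCLike.nonneg_iff.1 <|
    (CFC.negPart_nonneg X).posSemidef.trace_mul_nonneg (neg_le_iff_add_nonneg.1 hM₁).posSemidef).1
  rw [← CFC.posPart_add_negPart X]
  conv_lhs => rw [← CFC.posPart_sub_negPart X]
  simp only [sub_mul, mul_sub, mul_add, mul_one, trace_sub, trace_add, map_sub, map_add]
    at hpos hneg ⊢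
  linarith

def supportProj (A : Matrix n n 𝕜) : Matrix n n 𝕜 :=
  cfc (fun x : ℝ => if x = 0 then 0 else 1) A

lemma supportProj_nonneg (A : Matrix n n 𝕜) : 0 ≤ supportProj A :=
  cfc_nonneg fun x _ => by split_ifs <;> norm_num

lemma supportProj_le_one (A : Matrix n n 𝕜) : supportProj A ≤ 1 :=
  cfc_le_one _ A fun x _ => by split_ifs <;> norm_num

lemma IsHermitian.mul_supportProj {A : Matrix n n 𝕜} (hA : A.IsHermitian) :
    A * supportProj A = A := by
  have hA' : IsSelfAdjoint A := hA
  rw [supportProj]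
  nth_rw 1 [← cfc_id' ℝ A]
  rw [← cfc_mul _ _ A (hg := finite_real_spectrum.continuousOn _)]
  conv_rhs => rw [← cfc_id' ℝ A]
  exact cfc_congr fun x _ => by split_ifs with h <;> simp [h]

lemma IsHermitian.trace_supportProj {A : Matrix n n 𝕜} (hA : A.IsHermitian) :
    (supportProj A).trace = A.rank := by
  rw [supportProj, hA.trace_cfc, hA.rank_eq_card_non_zero_eigs, Fintype.card_subtype,
    ← Finset.sum_boole]
  refine Finset.sum_congr rfl fun i _ => ?_
  split_ifs <;> simp_all

lemma IsHermitian.le_algebraMap_maxEig {A : Matrix n n ℂ} (hA : A.IsHermitian) :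
    A ≤ algebraMap ℝ _ (maxEig hA) :=
  le_algebraMap_of_spectrum_le (fun x hx => by
    obtain ⟨i, rfl⟩ := hA.spectrum_real_eq_range_eigenvalues ▸ hx
    exact le_ciSup (Set.finite_range _).bddAbove i) hA

lemma PosSemidef.maxEig_nonneg {A : Matrix n n ℂ} (hA : A.PosSemidef) : 0 ≤ maxEig hA.1 :=
  Real.iSup_nonneg hA.eigenvalues_nonneg

lemma PosSemidef.sqrt_eq_cfcSqrt {A : Matrix n n ℂ} (hA : A.PosSemidef) :
    hA.sqrt = CFC.sqrt A := by
  rw [CFC.sqrt_eq_real_sqrt A hA.nonneg, cfcₙ_eq_cfc, hA.1.cfc_eq]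
  rfl

end Matrix

lemma traceNorm_eq_re_trace_abs {n : Type*} [Fintype n] [DecidableEq n] (X : Matrix n n ℂ) :
    traceNorm X = (CFC.abs X).trace.re := by
  rw [traceNorm, Matrix.PosSemidef.sqrt_eq_cfcSqrt]
  rfl

/-- `‖σ - τ‖₁ ≥ 2 - 2 r ‖σ‖_∞` when `tr σ ≥ 1`, `tr τ = 1`
and `rank τ ≤ r`. -/
theorem traceNorm_lower_bound_rank
    {n : Type*} [Fintype n] [DecidableEq n]
    (σ τ : Matrix n n ℂ) (hσ : σ.PosSemidef) (hτ : τ.PosSemidef)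
    (hσtr : 1 ≤ σ.trace.re) (hτtr : τ.trace = 1)
    (r : ℕ) (hrank : τ.rank ≤ r) :
    2 - 2 * (r : ℝ) * maxEig hσ.1 ≤ traceNorm (σ - τ) := by
  set P := τ.supportProj
  have hM₁ : -1 ≤ 1 - 2 • P := by
    rw [← sub_nonneg, show 1 - 2 • P - -1 = 2 • (1 - P) by abel]
    exact nsmul_nonneg (sub_nonneg.2 τ.supportProj_le_one) 2
  have hM₂ : 1 - 2 • P ≤ 1 := sub_le_self _ (nsmul_nonneg τ.supportProj_nonneg 2)
  have hdual := Matrix.re_trace_mul_le_re_trace_abs (hσ.1.sub hτ.1) hM₁ hM₂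
  have hτP : (τ * P).trace = 1 := by rw [hτ.1.mul_supportProj, hτtr]
  have hσP : (σ * P).trace.re ≤ maxEig hσ.1 * r :=
    calc (σ * P).trace.re ≤ maxEig hσ.1 * P.trace.re :=
          Matrix.re_trace_mul_le_of_le_algebraMap hσ.1.le_algebraMap_maxEig τ.supportProj_nonneg
      _ ≤ maxEig hσ.1 * r := by
          rw [hτ.1.trace_supportProj]
          exact mul_le_mul_of_nonneg_left (by exact_mod_cast hrank) hσ.maxEig_nonneg
  rw [traceNorm_eq_re_trace_abs]
  simp only [two_nsmul, mul_sub, sub_mul, mul_add, mul_one, trace_sub, trace_add, hτP, hτtr,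
    RCLike.re_to_complex, Complex.sub_re, Complex.add_re, Complex.one_re] at hdual
  linarith
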